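/- arXiv:0907.4870 — 6 statements merged into one kernel-verified Lean document; each statement's English description precedes it below -/
import Mathlib

section
/- Let Z be a random variable on a probability space with 0 ≤ Z ≤ 1 almost surely, let c > 0, and define β₁ : [0,1] → ℝ by β₁(b) = 𝔼[max(b, Z)] − c. If β₁(0) < 0, then β₁(b) < b for all b ∈ [0,1]. -/
open MeasureTheory

/- Since `max b z ≤ b + max 0 z` for `b ≥ 0`, integrating gives `β₁(b) ≤ b + β₁(0)`, and `β₁(0) < 0`. -/

lemma max_le_add_max_zero {b : ℝ} (hb : 0 ≤ b) (z : ℝ) : max b z ≤ b + max 0 z :=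
  (max_le_max_left b (le_max_right 0 z)).trans (max_le_add_of_nonneg hb (le_max_left 0 z))

lemma integral_max_le_add_integral_max_zero {Ω : Type*} [MeasurableSpace Ω] {μ : Measure Ω}
    [IsProbabilityMeasure μ] {Z : Ω → ℝ} (hZ : Integrable Z μ) {b : ℝ} (hb : 0 ≤ b) :
    ∫ ω, max b (Z ω) ∂μ ≤ b + ∫ ω, max 0 (Z ω) ∂μ := by
  have hmax : ∀ a : ℝ, Integrable (fun ω => max a (Z ω)) μ :=
    fun a => (integrable_const a).sup hZ
  calc ∫ ω, max b (Z ω) ∂μ ≤ ∫ ω, b + max 0 (Z ω) ∂μ :=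
        integral_mono (hmax b) ((integrable_const b).add (hmax 0))
          fun ω => max_le_add_max_zero hb (Z ω)
    _ = b + ∫ ω, max 0 (Z ω) ∂μ := by
        rw [integral_add (integrable_const b) (hmax 0), integral_const, probReal_univ, one_smul]

theorem beta_one_below_identity_general
    {Ω : Type*} [MeasurableSpace Ω] (μ : Measure Ω) [IsProbabilityMeasure μ]
    (Z : Ω → ℝ) (hZmeas : Measurable Z)
    (hZ01 : ∀ᵐ ω ∂μ, Z ω ∈ Set.Icc (0 : ℝ) 1)
    (c : ℝ)
    (h0 : (∫ ω, max 0 (Z ω) ∂μ) - c < 0) :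
    ∀ b ∈ Set.Icc (0 : ℝ) 1, (∫ ω, max b (Z ω) ∂μ) - c < b := by
  intro b hb
  have hZ : Integrable Z μ := .of_mem_Icc 0 1 hZmeas.aemeasurable hZ01
  linarith [integral_max_le_add_integral_max_zero hZ hb.1]

/-- Part 2 of Lemma 3: if `β₁(0) < 0`, then `β₁(b) < b` for all `b ∈ [0,1]`,
where `β₁(b) = 𝔼[max(b, Z)] − c`. -/
theorem beta_one_below_identity
    {Ω : Type*} [MeasurableSpace Ω] (μ : Measure Ω) [IsProbabilityMeasure μ]
    (Z : Ω → ℝ) (hZmeas : Measurable Z)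
    (hZ01 : ∀ᵐ ω ∂μ, Z ω ∈ Set.Icc (0 : ℝ) 1)
    (c : ℝ) (hc : 0 < c)
    (h0 : (∫ ω, max 0 (Z ω) ∂μ) - c < 0) :
    ∀ b ∈ Set.Icc (0 : ℝ) 1, (∫ ω, max b (Z ω) ∂μ) - c < b :=
  beta_one_below_identity_general μ Z hZmeas hZ01 c h0
end

section
/- Let Z be a random variable on a probability space with 0 ≤ Z ≤ 1 almost surely, let c > 0, and define β₁ : [0,1] → ℝ by β₁(b) = 𝔼[max(b, Z)] − c. If β₁(0) ≥ 0, then there exists a unique α ∈ [0,1) such that β₁(α) = α. -/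
open MeasureTheory

/-- Part 3 of Lemma 3: if `β₁(0) ≥ 0`, then `β₁(b) = 𝔼[max(b, Z)] − c` has a
unique fixed point `α ∈ [0,1)`. -/
theorem beta_one_unique_fixed_point
    {Ω : Type*} [MeasurableSpace Ω] (μ : Measure Ω) [IsProbabilityMeasure μ]
    (Z : Ω → ℝ) (hZmeas : Measurable Z)
    (hZ01 : ∀ᵐ ω ∂μ, Z ω ∈ Set.Icc (0 : ℝ) 1)
    (c : ℝ) (hc : 0 < c)
    (h0 : 0 ≤ (∫ ω, max 0 (Z ω) ∂μ) - c) :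
    ∃! α : ℝ, α ∈ Set.Ico (0 : ℝ) 1 ∧ (∫ ω, max α (Z ω) ∂μ) - c = α := by
  set F : ℝ → ℝ := fun b => ∫ ω, max b (Z ω) ∂μ with hF
  have hInt : ∀ b : ℝ, Integrable (fun ω => max b (Z ω)) μ := by
    intro b
    refine ⟨(measurable_const.max hZmeas).aestronglyMeasurable, ?_⟩
    refine HasFiniteIntegral.of_bounded (C := max |b| 1) ?_
    filter_upwards [hZ01] with ω hω
    have h1 : max b (Z ω) ≤ max |b| 1 :=
      max_le_max (le_abs_self b) hω.2
    have h2 : -(max |b| 1) ≤ max b (Z ω) := by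
      have : -(max |b| 1) ≤ b := by
        have := neg_abs_le b
        have hb : -|b| ≤ b := this
        nlinarith [le_max_left |b| (1:ℝ)]
      exact this.trans (le_max_left _ _)
    rw [Real.norm_eq_abs, abs_le]
    exact ⟨h2, h1⟩
  -- Lipschitz continuity of F
  have hLip : ∀ x y : ℝ, |F x - F y| ≤ |x - y| := by
    intro x y
    have : F x - F y = ∫ ω, (max x (Z ω) - max y (Z ω)) ∂μ := by
      rw [integral_sub (hInt x) (hInt y)]
    rw [this]
    have := norm_integral_le_of_norm_le_const (μ := μ)
      (f := fun ω => max x (Z ω) - max y (Z ω)) (C := |x - y|) ?_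
    · simpa [measure_univ] using this
    · filter_upwards with ω
      have := abs_max_sub_max_le_abs x y (Z ω)
      simpa [Real.norm_eq_abs, max_comm] using abs_max_sub_max_le_abs x y (Z ω)
  have hcont : Continuous F := by
    have : LipschitzWith 1 F := by
      refine LipschitzWith.of_dist_le_mul fun x y => ?_
      simpa [Real.dist_eq] using hLip x y
    exact this.continuous
  -- F 1 = 1
  have hF1 : F 1 = 1 := by
    have : (fun ω => max (1:ℝ) (Z ω)) =ᵐ[μ] fun _ => (1:ℝ) := by
      filter_upwards [hZ01] with ω hω
      exact max_eq_left hω.2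
    rw [hF]
    simp only
    rw [integral_congr_ae this, integral_const]
    simp [measure_univ]
  -- existence via IVT on g b = F b - c - b
  set g : ℝ → ℝ := fun b => F b - c - b with hg
  have hgcont : Continuous g := by continuity
  have hg0 : 0 ≤ g 0 := by simpa [hg] using h0
  have hg1 : g 1 = -c := by simp [hg, hF1]
  have hmem : (0:ℝ) ∈ Set.Icc (g 1) (g 0) := by
    constructor
    · rw [hg1]; linarith
    · exact hg0
  obtain ⟨α, hαIcc, hgα⟩ := intermediate_value_Icc' (by norm_num : (0:ℝ) ≤ 1)
    hgcont.continuousOn hmem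
  have hαlt : α < 1 := by
    rcases lt_or_eq_of_le hαIcc.2 with h | h
    · exact h
    · exfalso; rw [h] at hgα; rw [hg1] at hgα; linarith
  have hαfix : F α - c = α := by
    have : F α - c - α = 0 := hgα
    linarith
  -- uniqueness key lemma
  have key : ∀ a b : ℝ, F a - c = a → F b - c = b → a ≤ b → b = a := by
    intro a b ha hb hab
    by_contra hne
    have hlt : a < b := lt_of_le_of_ne hab (fun h => hne h.symm)
    have hFab : F b - F a = b - a := by linarith
    -- h ω := (b-a) - (max b Z - max a Z) ≥ 0, integral 0
    set h : Ω → ℝ := fun ω => (b - a) - (max b (Z ω) - max a (Z ω)) with hh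
    have hInth : Integrable h μ :=
      (integrable_const (b - a)).sub ((hInt b).sub (hInt a))
    have hnonneg : 0 ≤ᵐ[μ] h := by
      filter_upwards with ω
      have := abs_max_sub_max_le_abs b a (Z ω)
      have h1 : max b (Z ω) - max a (Z ω) ≤ |b - a| :=
        (le_abs_self _).trans this
      rw [abs_of_pos (by linarith : (0:ℝ) < b - a)] at h1
      simp only [hh, Pi.zero_apply]
      linarith
    have hint0 : ∫ ω, h ω ∂μ = 0 := by
      rw [hh]
      have hsub : Integrable (fun ω => max b (Z ω) - max a (Z ω)) μ :=
        (hInt b).sub (hInt a)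
      have : ∫ ω, ((b - a) - (max b (Z ω) - max a (Z ω))) ∂μ
          = (b - a) - (F b - F a) := by
        rw [integral_sub (integrable_const _) hsub,
          integral_sub (hInt b) (hInt a), integral_const]
        simp [measure_univ, hF]
      rw [this, hFab]; ring
    have hae : h =ᵐ[μ] 0 := (integral_eq_zero_iff_of_nonneg_ae hnonneg hInth).mp hint0
    -- hence a.e. Z ≤ a, so max a Z = a a.e.
    have hZa : ∀ᵐ ω ∂μ, max a (Z ω) = a := by
      filter_upwards [hae] with ω hω
      simp only [hh, Pi.zero_apply] at hω
      have heq : max b (Z ω) - max a (Z ω) = b - a := by linarith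
      by_cases hza : Z ω ≤ a
      · exact max_eq_left hza
      · exfalso
        push_neg at hza
        have hma : max a (Z ω) = Z ω := max_eq_right hza.le
        rw [hma] at heq
        rcases le_or_gt (Z ω) b with hzb | hzb
        · have : max b (Z ω) = b := max_eq_left hzb
          rw [this] at heq; linarith
        · have : max b (Z ω) = Z ω := max_eq_right hzb.le
          rw [this] at heq; linarith
    have hFa : F a = a := by
      rw [hF]
      simp only
      rw [integral_congr_ae hZa, integral_const]
      simp [measure_univ]
    rw [hFa] at ha
    linarith
  have hα0 : 0 ≤ α := hαIcc.1
  refine ⟨α, ⟨⟨hα0, hαlt⟩, hαfix⟩, ?_⟩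
  rintro y ⟨⟨hy0, hy1⟩, hyfix⟩
  rcases le_total y α with h | h
  · exact (key y α hyfix hαfix h).symm
  · exact key α y hαfix hyfix h
end

section
/- Let Z be a random variable on a probability space with 0 ≤ Z ≤ 1 almost surely, let c > 0, and define β₁ : [0,1] → ℝ by β₁(b) = 𝔼[max(b, Z)] − c. Suppose β₁(0) ≥ 0 and let α ∈ [0,1) satisfy β₁(α) = α. Then β₁(b) < b for all b ∈ (α, 1], and β₁(b) > b for all b ∈ [0, α). -/
/-!
Since `𝔼[max b Z] - b = 𝔼[(Z - b)⁺]`, the gap `β₁(b) - b` is nonincreasing in `b`, and it drops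
strictly between `s < t` as soon as `Z > s` with positive probability. At the fixed point the gap
vanishes, so `𝔼[(Z - α)⁺] = c > 0` and `Z > α` with positive probability; hence the gap is
strictly negative to the right of `α` and strictly positive to its left.
-/

open MeasureTheory

theorem max_sub_max_lt_sub {α : Type*} [AddCommGroup α] [LinearOrder α] [IsOrderedAddMonoid α]
    {s t z : α} (hst : s < t) (hsz : s < z) : max t z - max s z < t - s := by
  grind

theorem max_sub_max_le_sub {α : Type*} [AddCommGroup α] [LinearOrder α] [IsOrderedAddMonoid α]
    {s t : α} (z : α) (hst : s ≤ t) : max t z - max s z ≤ t - s := by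
  simpa [max_eq_left (sub_nonneg.2 hst)] using max_sub_max_le_max t z s z

section

variable {Ω : Type*} [MeasurableSpace Ω] {μ : Measure Ω} {Z : Ω → ℝ}

theorem MeasureTheory.Integrable.const_max [IsFiniteMeasure μ] (hZ : Integrable Z μ) (b : ℝ) :
    Integrable (fun ω ↦ max b (Z ω)) μ :=
  (integrable_const b).sup hZ

theorem integral_const_max_of_ae_le [IsProbabilityMeasure μ] {a : ℝ} (h : ∀ᵐ ω ∂μ, Z ω ≤ a) :
    ∫ ω, max a (Z ω) ∂μ = a := by
  rw [integral_congr_ae (h.mono fun _ ↦ max_eq_left), integral_const, probReal_univ, one_smul]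

theorem integral_const_max_sub_lt [IsProbabilityMeasure μ] (hZ : Integrable Z μ) {s t : ℝ}
    (hst : s < t) (hZs : ¬ ∀ᵐ ω ∂μ, Z ω ≤ s) :
    ∫ ω, max t (Z ω) ∂μ - ∫ ω, max s (Z ω) ∂μ < t - s := by
  set increment : Ω → ℝ := fun ω ↦ max t (Z ω) - max s (Z ω)
  have hinc_int : Integrable increment μ := (hZ.const_max t).sub (hZ.const_max s)
  set gap : Ω → ℝ := fun ω ↦ (t - s) - increment ω
  have hgap_nonneg : 0 ≤ᵐ[μ] gap :=
    .of_forall fun ω ↦ sub_nonneg.2 (max_sub_max_le_sub (Z ω) hst.le)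
  have hgap_support : {ω | s < Z ω} ⊆ Function.support gap := fun ω hω ↦
    (sub_pos.2 (max_sub_max_lt_sub hst hω)).ne'
  have hgap_pos : 0 < ∫ ω, gap ω ∂μ := by
    rw [integral_pos_iff_support_of_nonneg_ae hgap_nonneg
      ((integrable_const _).sub hinc_int)]
    refine (pos_iff_ne_zero.2 fun h ↦ hZs ?_).trans_le (measure_mono hgap_support)
    simpa [ae_iff] using h
  rw [integral_sub (integrable_const _) hinc_int,
    integral_sub (hZ.const_max t) (hZ.const_max s), integral_const, probReal_univ,
    one_smul] at hgap_pos
  linarith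

end

theorem beta_one_sign_around_fixed_point_general
    {Ω : Type*} [MeasurableSpace Ω] (μ : Measure Ω) [IsProbabilityMeasure μ]
    (Z : Ω → ℝ) (hZmeas : Measurable Z)
    (hZ01 : ∀ᵐ ω ∂μ, Z ω ∈ Set.Icc (0 : ℝ) 1)
    (c : ℝ) (hc : 0 < c)
    (α : ℝ)
    (hfix : (∫ ω, max α (Z ω) ∂μ) - c = α) :
    (∀ b ∈ Set.Ioc α 1, (∫ ω, max b (Z ω) ∂μ) - c < b) ∧
    (∀ b ∈ Set.Ico (0 : ℝ) α, (∫ ω, max b (Z ω) ∂μ) - c > b) := by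
  have hZ : Integrable Z μ :=
    .of_bound hZmeas.aestronglyMeasurable 1 <| hZ01.mono fun ω hω ↦
      abs_le.2 ⟨by linarith [hω.1], hω.2⟩
  have hα_exceeded : ¬ ∀ᵐ ω ∂μ, Z ω ≤ α := fun h ↦ by
    rw [integral_const_max_of_ae_le h] at hfix
    linarith
  refine ⟨fun b hb ↦ ?_, fun b hb ↦ ?_⟩
  · linarith [integral_const_max_sub_lt hZ hb.1 hα_exceeded]
  · have hb_exceeded : ¬ ∀ᵐ ω ∂μ, Z ω ≤ b := fun h ↦
      hα_exceeded (h.mono fun _ hω ↦ hω.trans hb.2.le)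
    linarith [integral_const_max_sub_lt hZ hb.2 hb_exceeded]

/-- Part 4 of Lemma 3: if `β₁(0) ≥ 0` and `α ∈ [0,1)` is a fixed point of
`β₁(b) = 𝔼[max(b, Z)] − c`, then `β₁(b) < b` on `(α, 1]` and `β₁(b) > b` on `[0, α)`. -/
theorem beta_one_sign_around_fixed_point
    {Ω : Type*} [MeasurableSpace Ω] (μ : Measure Ω) [IsProbabilityMeasure μ]
    (Z : Ω → ℝ) (hZmeas : Measurable Z)
    (hZ01 : ∀ᵐ ω ∂μ, Z ω ∈ Set.Icc (0 : ℝ) 1)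
    (c : ℝ) (hc : 0 < c)
    (h0 : 0 ≤ (∫ ω, max 0 (Z ω) ∂μ) - c)
    (α : ℝ) (hα : α ∈ Set.Ico (0 : ℝ) 1)
    (hfix : (∫ ω, max α (Z ω) ∂μ) - c = α) :
    (∀ b ∈ Set.Ioc α 1, (∫ ω, max b (Z ω) ∂μ) - c < b) ∧
    (∀ b ∈ Set.Ico (0 : ℝ) α, (∫ ω, max b (Z ω) ∂μ) - c > b) :=
  beta_one_sign_around_fixed_point_general μ Z hZmeas hZ01 c hc α hfix
end

section
/- Let Z be a random variable on a probability space with 0 ≤ Z ≤ 1 almost surely, let c > 0, and define β₁ : [0,1] → ℝ by β₁(b) = 𝔼[max(b, Z)] − c. Define the threshold α by: α = 0 if β₁(0) < 0, and otherwise α is the unique point of [0,1) with β₁(α) = α. Then for every b ∈ [0,1], one has b ≥ β₁(b) if and only if b ≥ α. -/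
/-!
Write `e(b) = 𝔼[max(b, Z)] − b = 𝔼[(Z − b)⁺]` for the expected excess of `Z` over `b`, so that
`b ≥ β₁(b)` reads `e(b) ≤ c`. The function `e` is antitone, and strictly decreasing to the left of
any point where it is positive, because there `Z` exceeds the point with positive probability. If
`β₁(0) < 0` then `e(b) ≤ e(0) < c` everywhere; otherwise `e(α) = c > 0`, so `e(b) ≤ c` exactly
for `b ≥ α`.
-/

open MeasureTheory

lemma max_sub_le_max_sub {a b : ℝ} (hba : b ≤ a) (z : ℝ) : max a z - a ≤ max b z - b := by
  rcases le_total z b with hzb | hbz <;> rcases le_total z a with hza | haz <;>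
    simp only [max_eq_left, max_eq_right, *] <;> linarith

lemma max_sub_lt_max_sub {a b z : ℝ} (hba : b < a) (hz : max a z - a ≠ 0) :
    max a z - a < max b z - b := by
  have haz : a < z := by
    by_contra! hza
    exact hz (by rw [max_eq_left hza, sub_self])
  rw [max_eq_right haz.le, max_eq_right (hba.trans haz).le]
  linarith

section ExpectedExcess

variable {Ω : Type*} [MeasurableSpace Ω] {μ : Measure Ω} [IsFiniteMeasure μ] {Z : Ω → ℝ}

lemma integrable_max_const (hZ : Integrable Z μ) (b : ℝ) :
    Integrable (fun ω => max b (Z ω)) μ :=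
  (integrable_const b).sup hZ

lemma integrable_max_const_sub (hZ : Integrable Z μ) (b : ℝ) :
    Integrable (fun ω => max b (Z ω) - b) μ :=
  (integrable_max_const hZ b).sub (integrable_const b)

variable [IsProbabilityMeasure μ]

lemma integral_max_const_sub (hZ : Integrable Z μ) (b : ℝ) :
    ∫ ω, max b (Z ω) ∂μ - b = ∫ ω, (max b (Z ω) - b) ∂μ := by
  rw [integral_sub (integrable_max_const hZ b) (integrable_const b), integral_const]
  simp

lemma antitone_integral_max_const_sub (hZ : Integrable Z μ) :
    Antitone fun b => ∫ ω, max b (Z ω) ∂μ - b := by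
  intro b a hba
  simp only [integral_max_const_sub hZ]
  exact integral_mono (integrable_max_const_sub hZ a) (integrable_max_const_sub hZ b)
    fun ω => max_sub_le_max_sub hba (Z ω)

lemma integral_max_const_sub_lt {a b : ℝ} (hZ : Integrable Z μ) (hba : b < a)
    (hpos : 0 < ∫ ω, max a (Z ω) ∂μ - a) :
    ∫ ω, max a (Z ω) ∂μ - a < ∫ ω, max b (Z ω) ∂μ - b := by
  have hfa := integrable_max_const_sub hZ a
  have hfb := integrable_max_const_sub hZ b
  rw [integral_max_const_sub hZ, integral_pos_iff_support_of_nonneg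
    (fun ω => sub_nonneg.2 (le_max_left a (Z ω))) hfa] at hpos
  rw [integral_max_const_sub hZ, integral_max_const_sub hZ, ← sub_pos, ← integral_sub hfb hfa,
    integral_pos_iff_support_of_nonneg
      (fun ω => sub_nonneg.2 (max_sub_le_max_sub hba.le (Z ω))) (hfb.sub hfa)]
  exact hpos.trans_le <| measure_mono fun ω hω => (sub_pos.2 (max_sub_lt_max_sub hba hω)).ne'

end ExpectedExcess

/-- Characterization underlying the Simplified Forward policy: with
`β₁(b) = 𝔼[max(b, Z)] − c` and the threshold `α` (equal to `0` when `β₁(0) < 0`,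
and equal to the unique fixed point of `β₁` in `[0,1)` otherwise), for every
`b ∈ [0,1]` we have `b ≥ β₁(b)` iff `b ≥ α`. -/
theorem stop_iff_above_threshold
    {Ω : Type*} [MeasurableSpace Ω] (μ : Measure Ω) [IsProbabilityMeasure μ]
    (Z : Ω → ℝ) (hZmeas : Measurable Z)
    (hZ01 : ∀ᵐ ω ∂μ, Z ω ∈ Set.Icc (0 : ℝ) 1)
    (c : ℝ) (hc : 0 < c)
    (α : ℝ)
    (hαneg : (∫ ω, max 0 (Z ω) ∂μ) - c < 0 → α = 0)
    (hαpos : 0 ≤ (∫ ω, max 0 (Z ω) ∂μ) - c →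
      α ∈ Set.Ico (0 : ℝ) 1 ∧ (∫ ω, max α (Z ω) ∂μ) - c = α) :
    ∀ b ∈ Set.Icc (0 : ℝ) 1, ((∫ ω, max b (Z ω) ∂μ) - c ≤ b ↔ α ≤ b) := by
  have hZ : Integrable Z μ := .of_mem_Icc 0 1 hZmeas.aemeasurable hZ01
  have hanti := antitone_integral_max_const_sub hZ
  intro b hb
  rw [sub_le_comm]
  rcases lt_or_ge ((∫ ω, max 0 (Z ω) ∂μ) - c) 0 with hβ₀ | hβ₀
  · rw [hαneg hβ₀]
    have hexcess : ∫ ω, max b (Z ω) ∂μ - b ≤ ∫ ω, max 0 (Z ω) ∂μ := by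
      simpa only [sub_zero] using hanti hb.1
    exact iff_of_true (by linarith) hb.1
  · obtain ⟨-, hfix⟩ := hαpos hβ₀
    have hα : ∫ ω, max α (Z ω) ∂μ - α = c := by linarith
    refine ⟨fun hb_stop => ?_, fun hαb => hα ▸ hanti hαb⟩
    by_contra! hbα
    exact (integral_max_const_sub_lt hZ hbα (hα ▸ hc)).not_ge (hα ▸ hb_stop)
end

section
/- Let Z be a random variable on a probability space with 0 ≤ Z ≤ 1 almost surely, let c > 0, and define a sequence of functions βₙ : [0,1] → ℝ recursively by β₁(b) = 𝔼[max(b, Z)] − c and β_{n+1}(b) = 𝔼[max(b, Z, βₙ(max(b, Z)))] − c for n ≥ 1. Define the threshold α by: α = 0 if β₁(0) < 0, and otherwise α is the unique point of [0,1) with β₁(α) = α. Then for every n ≥ 1: β_{n+1}(b) ≥ βₙ(b) for all b ∈ [0,1], and βₙ(b) = β₁(b) for all b ∈ [α, 1]. -/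
open MeasureTheory

/-- Lemma 5: the Bellman threshold functions `βₙ`, defined by
`β₁(b) = 𝔼[max(b, Z)] − c` and `β_{n+1}(b) = 𝔼[max(b, Z, βₙ(max(b, Z)))] − c`,
are pointwise nondecreasing in `n` on `[0,1]`, and all agree with `β₁` on
`[α, 1]`, where `α` is the SF threshold (zero when `β₁(0) < 0`, the unique
fixed point of `β₁` in `[0,1)` otherwise). -/
theorem beta_seq_monotone_and_stationary
    {Ω : Type*} [MeasurableSpace Ω] (μ : Measure Ω) [IsProbabilityMeasure μ]
    (Z : Ω → ℝ) (hZmeas : Measurable Z)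
    (hZ01 : ∀ᵐ ω ∂μ, Z ω ∈ Set.Icc (0 : ℝ) 1)
    (c : ℝ) (hc : 0 < c)
    (β : ℕ → ℝ → ℝ)
    (hβ₁ : ∀ b : ℝ, β 1 b = (∫ ω, max b (Z ω) ∂μ) - c)
    (hβrec : ∀ n : ℕ, 1 ≤ n → ∀ b : ℝ,
      β (n + 1) b = (∫ ω, max (max b (Z ω)) (β n (max b (Z ω))) ∂μ) - c)
    (α : ℝ)
    (hαneg : β 1 0 < 0 → α = 0)
    (hαpos : 0 ≤ β 1 0 → α ∈ Set.Ico (0 : ℝ) 1 ∧ β 1 α = α) :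
    ∀ n : ℕ, 1 ≤ n →
      (∀ b ∈ Set.Icc (0 : ℝ) 1, β n b ≤ β (n + 1) b) ∧
      (∀ b ∈ Set.Icc α 1, β n b = β 1 b) := by
  -- basic integrability of ω ↦ max b (Z ω)
  have hintmax : ∀ b : ℝ, Integrable (fun ω => max b (Z ω)) μ := by
    intro b
    refine Integrable.mono' (integrable_const (max |b| 1))
      ((measurable_const.max hZmeas).aestronglyMeasurable) ?_
    filter_upwards [hZ01] with ω hω
    have h1 : Z ω ≤ 1 := hω.2
    have h0 : 0 ≤ Z ω := hω.1
    have hb : b ≤ |b| := le_abs_self b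
    rw [Real.norm_eq_abs, abs_le]
    constructor
    · have h2 : -|b| ≤ b := neg_abs_le b
      have h3 : b ≤ max b (Z ω) := le_max_left _ _
      have h4 : |b| ≤ max |b| 1 := le_max_left _ _
      linarith
    · exact max_le (le_max_of_le_left hb) (le_max_of_le_right h1)
  have hone : (∫ _ω : Ω, (1:ℝ) ∂μ) = 1 := by simp
  have hconst : ∀ r : ℝ, (∫ _ω : Ω, r ∂μ) = r := by intro r; simp
  -- monotonicity of β 1
  have hmono1 : ∀ b b' : ℝ, b ≤ b' → β 1 b ≤ β 1 b' := by
    intro b b' h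
    rw [hβ₁, hβ₁]
    have := integral_mono (hintmax b) (hintmax b')
      (fun ω => max_le_max h (le_refl (Z ω)))
    linarith
  -- slope: β 1 b - b is nonincreasing
  have hslope : ∀ b b' : ℝ, b ≤ b' → β 1 b' - b' ≤ β 1 b - b := by
    intro b b' h
    rw [hβ₁, hβ₁]
    have hpt : ∀ ω, max b' (Z ω) ≤ max b (Z ω) + (b' - b) := by
      intro ω
      exact max_le (by linarith [le_max_left b (Z ω)]) (by linarith [le_max_right b (Z ω)])
    have h2 : (∫ ω, max b' (Z ω) ∂μ) ≤ ∫ ω, (max b (Z ω) + (b' - b)) ∂μ :=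
      integral_mono (hintmax b') ((hintmax b).add (integrable_const (b' - b))) hpt
    rw [integral_add (hintmax b) (integrable_const (b' - b)), hconst] at h2
    linarith
  -- α facts
  have hαfacts : 0 ≤ α ∧ α ≤ 1 ∧ ∀ b : ℝ, α ≤ b → β 1 b ≤ b := by
    rcases lt_or_ge (β 1 0) 0 with h | h
    · have hα := hαneg h
      subst hα
      exact ⟨le_rfl, zero_le_one, fun b hb => by have := hslope 0 b hb; linarith⟩
    · obtain ⟨⟨h0, h1⟩, hfix⟩ := hαpos h
      exact ⟨h0, h1.le, fun b hb => by have := hslope α b hb; linarith⟩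
  obtain ⟨hα0, hα1, hαkey⟩ := hαfacts
  -- a.e. the argument max b (Z ω) lies in [b, 1]
  have hMae : ∀ b : ℝ, b ≤ 1 → ∀ᵐ ω ∂μ, b ≤ max b (Z ω) ∧ max b (Z ω) ≤ 1 := by
    intro b hb
    filter_upwards [hZ01] with ω hω
    exact ⟨le_max_left _ _, max_le hb hω.2⟩
  -- key integrability lemma
  have hIntF : ∀ g : ℝ → ℝ,
      (∀ x ∈ Set.Icc (0:ℝ) 1, ∀ y ∈ Set.Icc (0:ℝ) 1, x ≤ y → g x ≤ g y) →
      (∀ x ∈ Set.Icc (0:ℝ) 1, |g x| ≤ 1 + c) →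
      ∀ b ∈ Set.Icc (0:ℝ) 1,
        Integrable (fun ω => max (max b (Z ω)) (g (max b (Z ω)))) μ := by
    intro g hgm hgb b hb
    set cl : ℝ → ℝ := fun x => max 0 (min 1 x) with hcl
    have hclmem : ∀ x, cl x ∈ Set.Icc (0:ℝ) 1 := by
      intro x
      exact ⟨le_max_left _ _, max_le zero_le_one (min_le_left _ _)⟩
    have hclmono : Monotone cl := fun x y h =>
      max_le_max le_rfl (min_le_min le_rfl h)
    have hg' : Monotone (fun x => g (cl x)) := fun x y h =>
      hgm _ (hclmem x) _ (hclmem y) (hclmono h)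
    have hclid : ∀ x ∈ Set.Icc (0:ℝ) 1, cl x = x := by
      intro x hx
      simp [hcl, min_eq_right hx.2, max_eq_right hx.1]
    have hmeas : Measurable (fun ω => max (max b (Z ω)) (g (cl (max b (Z ω))))) :=
      (measurable_const.max hZmeas).max
        (hg'.measurable.comp (measurable_const.max hZmeas))
    have haeeq : (fun ω => max (max b (Z ω)) (g (cl (max b (Z ω)))))
        =ᵐ[μ] (fun ω => max (max b (Z ω)) (g (max b (Z ω)))) := by
      filter_upwards [hZ01] with ω hω
      have hm : max b (Z ω) ∈ Set.Icc (0:ℝ) 1 :=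
        ⟨le_max_of_le_left hb.1, max_le hb.2 hω.2⟩
      rw [hclid _ hm]
    have hib : Integrable (fun ω => max (max b (Z ω)) (g (cl (max b (Z ω))))) μ := by
      refine Integrable.mono' (integrable_const (1 + c)) hmeas.aestronglyMeasurable ?_
      filter_upwards [hZ01] with ω hω
      have hm : max b (Z ω) ∈ Set.Icc (0:ℝ) 1 :=
        ⟨le_max_of_le_left hb.1, max_le hb.2 hω.2⟩
      rw [hclid _ hm]
      rw [Real.norm_eq_abs, abs_le]
      have := hgb _ hm
      rw [abs_le] at this
      constructor
      · exact le_max_of_le_left (by linarith [hm.1, hc])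
      · exact max_le (by linarith [hm.2, hc]) this.2
    exact hib.congr haeeq
  -- the main inductive invariant
  have hP : ∀ n : ℕ, 1 ≤ n →
      ((∀ x ∈ Set.Icc (0:ℝ) 1, ∀ y ∈ Set.Icc (0:ℝ) 1, x ≤ y → β n x ≤ β n y) ∧
       (∀ b ∈ Set.Icc (0:ℝ) 1, b - c ≤ β n b ∧ β n b ≤ 1 - c) ∧
       (∀ b ∈ Set.Icc α 1, β n b = β 1 b)) := by
    intro n hn
    induction n, hn using Nat.le_induction with
    | base =>
      refine ⟨fun x _ y _ h => hmono1 x y h, ?_, fun b _ => rfl⟩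
      intro b hb
      rw [hβ₁]
      constructor
      · have : (b:ℝ) = ∫ _ω, b ∂μ := (hconst b).symm
        have h2 := integral_mono (integrable_const b) (hintmax b)
          (fun ω => le_max_left _ _)
        rw [hconst] at h2
        linarith
      · have h2 := integral_mono_ae (hintmax b) (integrable_const (1:ℝ)) ?_
        · rw [hconst] at h2; linarith
        · filter_upwards [hZ01] with ω hω
          exact max_le hb.2 hω.2
    | succ n hn ih =>
      obtain ⟨ihm, ihb, ihe⟩ := ih
      have hgb : ∀ x ∈ Set.Icc (0:ℝ) 1, |β n x| ≤ 1 + c := by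
        intro x hx
        obtain ⟨h1, h2⟩ := ihb x hx
        rw [abs_le]
        constructor <;> [linarith [hx.1]; linarith]
      have hInt : ∀ b ∈ Set.Icc (0:ℝ) 1,
          Integrable (fun ω => max (max b (Z ω)) (β n (max b (Z ω)))) μ :=
        hIntF (β n) ihm hgb
      have hmono' : ∀ x ∈ Set.Icc (0:ℝ) 1, ∀ y ∈ Set.Icc (0:ℝ) 1,
          x ≤ y → β (n+1) x ≤ β (n+1) y := by
        intro x hx y hy hxy
        rw [hβrec n hn, hβrec n hn]
        have := integral_mono_ae (hInt x hx) (hInt y hy) ?_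
        · linarith
        · filter_upwards [hZ01] with ω hω
          have hmx : max x (Z ω) ∈ Set.Icc (0:ℝ) 1 :=
            ⟨le_max_of_le_left hx.1, max_le hx.2 hω.2⟩
          have hmy : max y (Z ω) ∈ Set.Icc (0:ℝ) 1 :=
            ⟨le_max_of_le_left hy.1, max_le hy.2 hω.2⟩
          have hmm : max x (Z ω) ≤ max y (Z ω) := max_le_max hxy le_rfl
          exact max_le_max hmm (ihm _ hmx _ hmy hmm)
      refine ⟨hmono', ?_, ?_⟩
      · intro b hb
        rw [hβrec n hn]
        constructor
        · have h2 := integral_mono (hintmax b) (hInt b hb)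
            (fun ω => le_max_left _ _)
          have h3 := integral_mono (integrable_const b) (hintmax b)
            (fun ω => le_max_left _ _)
          rw [hconst] at h3
          linarith
        · have h2 := integral_mono_ae (hInt b hb) (integrable_const (1:ℝ)) ?_
          · rw [hconst] at h2; linarith
          · filter_upwards [hZ01] with ω hω
            have hm : max b (Z ω) ∈ Set.Icc (0:ℝ) 1 :=
              ⟨le_max_of_le_left hb.1, max_le hb.2 hω.2⟩
            exact max_le hm.2 (by linarith [(ihb _ hm).2])
      · intro b hb
        have hb01 : b ∈ Set.Icc (0:ℝ) 1 := ⟨le_trans hα0 hb.1, hb.2⟩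
        rw [hβrec n hn, hβ₁]
        have heq : (fun ω => max (max b (Z ω)) (β n (max b (Z ω))))
            =ᵐ[μ] (fun ω => max b (Z ω)) := by
          filter_upwards [hZ01] with ω hω
          have hm : max b (Z ω) ∈ Set.Icc (0:ℝ) 1 :=
            ⟨le_max_of_le_left hb01.1, max_le hb01.2 hω.2⟩
          have hmα : max b (Z ω) ∈ Set.Icc α 1 :=
            ⟨le_max_of_le_left hb.1, hm.2⟩
          have : β n (max b (Z ω)) ≤ max b (Z ω) := by
            rw [ihe _ hmα]
            exact hαkey _ hmα.1
          exact max_eq_left this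
        rw [integral_congr_ae heq]
  -- monotonicity in n
  have hMon : ∀ n : ℕ, 1 ≤ n → ∀ b ∈ Set.Icc (0:ℝ) 1, β n b ≤ β (n+1) b := by
    intro n hn
    induction n, hn using Nat.le_induction with
    | base =>
      intro b hb
      obtain ⟨ihm, ihb, _⟩ := hP 1 le_rfl
      have hgb : ∀ x ∈ Set.Icc (0:ℝ) 1, |β 1 x| ≤ 1 + c := by
        intro x hx
        obtain ⟨h1, h2⟩ := ihb x hx
        rw [abs_le]
        constructor <;> [linarith [hx.1]; linarith]
      have hInt := hIntF (β 1) ihm hgb b hb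
      rw [hβrec 1 le_rfl, hβ₁]
      have := integral_mono (hintmax b) hInt (fun ω => le_max_left _ _)
      linarith
    | succ n hn ih =>
      intro b hb
      obtain ⟨ihm, ihb, _⟩ := hP n hn
      obtain ⟨ihm', ihb', _⟩ := hP (n+1) (by omega)
      have hgb : ∀ x ∈ Set.Icc (0:ℝ) 1, |β n x| ≤ 1 + c := by
        intro x hx
        obtain ⟨h1, h2⟩ := ihb x hx
        rw [abs_le]
        constructor <;> [linarith [hx.1]; linarith]
      have hgb' : ∀ x ∈ Set.Icc (0:ℝ) 1, |β (n+1) x| ≤ 1 + c := by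
        intro x hx
        obtain ⟨h1, h2⟩ := ihb' x hx
        rw [abs_le]
        constructor <;> [linarith [hx.1]; linarith]
      have hInt := hIntF (β n) ihm hgb b hb
      have hInt' := hIntF (β (n+1)) ihm' hgb' b hb
      rw [hβrec n hn, hβrec (n+1) (by omega)]
      have := integral_mono_ae hInt hInt' ?_
      · linarith
      · filter_upwards [hZ01] with ω hω
        have hm : max b (Z ω) ∈ Set.Icc (0:ℝ) 1 :=
          ⟨le_max_of_le_left hb.1, max_le hb.2 hω.2⟩
        exact max_le_max le_rfl (ih _ hm)
  intro n hn
  exact ⟨hMon n hn, (hP n hn).2.2⟩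
end

section
/- Let K ≥ 1 and 0 ≤ α ≤ 1. Let (T₁, Z₁), …, (T_K, Z_K) be i.i.d. random pairs where each Tᵢ is uniformly distributed on [0,1], each Zᵢ takes values in [0,1], and Tᵢ is independent of Zᵢ. Assume p_α = ℙ(Z₁ > α) > 0. Define the random variable Z* as follows: if the set E = {i : Zᵢ > α} is nonempty, let I be the index in E minimizing T_I (almost surely unique) and set Z* = Z_I; otherwise set Z* = max(Z₁, …, Z_K). Then for every z ∈ (α, 1], ℙ(Z* > z) = (1 − (1 − p_α)^K) · p_z / p_α, where p_z = ℙ(Z₁ > z). -/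
/-!
Off the null event that two wake-up times coincide, `Z* > z > α` happens exactly when, for some
nonempty `S` and some `i ∈ S`, `S` is the set of nodes with progress above `α`, node `i` wakes
strictly first among `S`, and `Zᵢ > z`. The wake-up part and the progress part of this event are
independent. The progress part has probability `p_z p_α^(|S|-1) (1-p_α)^(K-|S|)`, independently
of `i`, while for fixed `S` the wake-up parts partition `Ω` up to a null set, so summing over `i`
gives `1`. The binomial theorem then sums the remaining series over `S`.
-/

open MeasureTheory ProbabilityTheory Finset Function

section Independence

variable {Ω ι β γ : Type*} [MeasurableSpace Ω] {μ : Measure Ω}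

theorem indepFun_pi_of_iIndepFun_prodMk [Fintype ι] [MeasurableSpace β] [MeasurableSpace γ]
    {X : ι → Ω → β} {Y : ι → Ω → γ} (hX : ∀ i, AEMeasurable (X i) μ)
    (hY : ∀ i, AEMeasurable (Y i) μ) (hXY : iIndepFun (fun i ω => (X i ω, Y i ω)) μ)
    (hXYi : ∀ i, IndepFun (X i) (Y i) μ) :
    IndepFun (fun ω i => X i ω) (fun ω i => Y i ω) μ := by
  have := hXY.isProbabilityMeasure
  have hXind : iIndepFun X μ := hXY.comp (fun _ => Prod.fst) fun _ => measurable_fst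
  have hYind : iIndepFun Y μ := hXY.comp (fun _ => Prod.snd) fun _ => measurable_snd
  have hXYm : ∀ i, AEMeasurable (fun ω => (X i ω, Y i ω)) μ := fun i => (hX i).prodMk (hY i)
  have hlaw : ∀ i, μ.map (fun ω => (X i ω, Y i ω)) = (μ.map (X i)).prod (μ.map (Y i)) :=
    fun i => (indepFun_iff_map_prod_eq_prod_map_map (hX i) (hY i)).1 (hXYi i)
  let e := MeasurableEquiv.arrowProdEquivProdArrow β γ ι
  rw [indepFun_iff_map_prod_eq_prod_map_map (aemeasurable_pi_lambda _ hX)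
    (aemeasurable_pi_lambda _ hY), hXind.map_fun_eq_pi_map hX, hYind.map_fun_eq_pi_map hY]
  calc μ.map (fun ω => (fun i => X i ω, fun i => Y i ω))
      = (μ.map fun ω i => (X i ω, Y i ω)).map e :=
        (AEMeasurable.map_map_of_aemeasurable e.measurable.aemeasurable
          (aemeasurable_pi_lambda _ hXYm)).symm
    _ = (Measure.pi fun i => (μ.map (X i)).prod (μ.map (Y i))).map e := by
        rw [hXY.map_fun_eq_pi_map hXYm]
        simp_rw [hlaw]
    _ = _ := (measurePreserving_arrowProdEquivProdArrow β γ ι _ _).map_eq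

theorem measure_setOf_eq_eq_zero_of_indepFun [IsFiniteMeasure μ] [MeasurableSpace β]
    [MeasurableEq β] {X Y : Ω → β} (hX : AEMeasurable X μ) (hY : AEMeasurable Y μ)
    (hXY : IndepFun X Y μ) [NullSingletonClass (μ.map Y)] :
    μ {ω | X ω = Y ω} = 0 := by
  have hD : MeasurableSet (Set.diagonal β) := measurableSet_diagonal
  have hslice (x : β) : Prod.mk x ⁻¹' Set.diagonal β = {x} := Set.ext fun _ => eq_comm
  calc μ {ω | X ω = Y ω} = μ.map (fun ω => (X ω, Y ω)) (Set.diagonal β) :=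
        (Measure.map_apply_of_aemeasurable (hX.prodMk hY) hD).symm
    _ = (μ.map X).prod (μ.map Y) (Set.diagonal β) := by
        rw [(indepFun_iff_map_prod_eq_prod_map_map hX hY).1 hXY]
    _ = 0 := by simp only [Measure.prod_apply hD, hslice, measure_singleton, lintegral_zero]

theorem ae_injective_of_iIndepFun [Countable ι] [MeasurableSpace β] [MeasurableEq β]
    {X : ι → Ω → β} (hX : ∀ i, AEMeasurable (X i) μ) (hind : iIndepFun X μ)
    (hatom : ∀ i, NullSingletonClass (μ.map (X i))) : ∀ᵐ ω ∂μ, Injective fun i => X i ω := by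
  have := hind.isProbabilityMeasure
  refine ae_all_iff.2 fun i => ae_all_iff.2 fun j => ?_
  by_cases hij : i = j
  · exact .of_forall fun _ _ => hij
  · have htie := measure_setOf_eq_eq_zero_of_indepFun (hX i) (hX j) (hind.indepFun hij)
    exact (measure_eq_zero_iff_ae_notMem.1 htie).mono fun ω hω h => absurd h hω

end Independence

section Selection

variable {ι : Type*}

noncomputable def exceedances [Fintype ι] (α : ℝ) (x : ι → ℝ) : Finset ι :=
  univ.filter fun i => α < x i

def IsFirstIn (t : ι → ℝ) (S : Finset ι) (i : ι) : Prop := ∀ j ∈ S, j ≠ i → t i < t j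

/-- `zs` is the progress chosen by the SF policy with threshold `α` when node `i` wakes up at
time `t i` with progress `x i`. -/
def IsSFProgress [Fintype ι] (α : ℝ) (t x : ι → ℝ) (zs : ℝ) : Prop :=
  ((exceedances α x).Nonempty →
    ∃ i ∈ exceedances α x, (∀ j ∈ exceedances α x, t i ≤ t j) ∧ zs = x i) ∧
  (¬ (exceedances α x).Nonempty → zs = ⨆ i, x i)

variable {t x : ι → ℝ} {S : Finset ι} {i j : ι}

theorem IsFirstIn.eq (hi : IsFirstIn t S i) (hj : IsFirstIn t S j) (hiS : i ∈ S) (hjS : j ∈ S) :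
    i = j := by
  by_contra hij
  exact (hi j hjS (Ne.symm hij)).asymm (hj i hiS hij)

theorem isFirstIn_of_forall_le (ht : Injective t) (hmin : ∀ j ∈ S, t i ≤ t j) :
    IsFirstIn t S i :=
  fun j hj hji => (hmin j hj).lt_of_ne (ht.ne hji.symm)

theorem exists_isFirstIn (ht : Injective t) (hS : S.Nonempty) : ∃ i ∈ S, IsFirstIn t S i := by
  obtain ⟨i, hi, hmin⟩ := S.exists_min_image t hS
  exact ⟨i, hi, isFirstIn_of_forall_le ht hmin⟩

theorem IsSFProgress.lt_iff [Fintype ι] [Nonempty ι] {α z zs : ℝ} (h : IsSFProgress α t x zs)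
    (ht : Injective t) (hαz : α < z) :
    z < zs ↔ ∃ i ∈ exceedances α x, IsFirstIn t (exceedances α x) i ∧ z < x i := by
  by_cases hE : (exceedances α x).Nonempty
  · obtain ⟨i, hi, hmin, rfl⟩ := h.1 hE
    have hfirst := isFirstIn_of_forall_le ht hmin
    refine ⟨fun hz => ⟨i, hi, hfirst, hz⟩, ?_⟩
    rintro ⟨j, hj, hjfirst, hz⟩
    rwa [hfirst.eq hjfirst hi hj]
  · have hle : ∀ i, x i ≤ α := fun i => not_lt.1 fun hi => hE ⟨i, by simpa [exceedances] using hi⟩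
    rw [h.2 hE]
    refine ⟨fun hz => absurd (hz.trans_le (ciSup_le hle)) hαz.not_gt, ?_⟩
    rintro ⟨i, hi, -⟩
    exact absurd ⟨i, hi⟩ hE

variable [DecidableEq ι]

def exceedanceBox (α z : ℝ) (S : Finset ι) (i : ι) : ι → Set ℝ :=
  S.piecewise (update (fun _ => Set.Ioi α) i (Set.Ioi z)) fun _ => Set.Iic α

theorem exceedances_eq_and_lt_iff [Fintype ι] {α z : ℝ} (hαz : α ≤ z) (hi : i ∈ S) :
    exceedances α x = S ∧ z < x i ↔ x ∈ Set.univ.pi (exceedanceBox α z S i) := by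
  simp only [Set.mem_univ_pi, exceedanceBox, Finset.piecewise, update_apply, Finset.ext_iff,
    exceedances, mem_filter, mem_univ, true_and]
  constructor
  · rintro ⟨hS, hz⟩ j
    by_cases hj : j ∈ S
    · by_cases hji : j = i
      · subst hji
        simp [hj, hz]
      · simp [hj, hji, (hS j).2 hj]
    · simpa [hj] using mt (hS j).1 hj
  · intro hx
    have hz : z < x i := by simpa [hi] using hx i
    refine ⟨fun j => ⟨fun hj => ?_, fun hj => ?_⟩, hz⟩
    · by_contra hjS
      have := hx j
      simp only [hjS, if_false, Set.mem_Iic] at this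
      linarith
    · by_cases hji : j = i
      · subst hji
        exact hαz.trans_lt hz
      · simpa [hj, hji] using hx j

theorem prod_piecewise_update_const [Fintype ι] {M : Type*} [CommMonoid M] (hi : i ∈ S)
    (a b c : M) :
    ∏ j, S.piecewise (update (fun _ => b) i a) (fun _ => c) j
      = a * b ^ (#S - 1) * c ^ (Fintype.card ι - #S) := by
  rw [prod_piecewise, univ_inter, prod_update_of_mem hi, prod_const, prod_const, card_sdiff,
    singleton_inter_of_mem hi, card_singleton, ← compl_eq_univ_sdiff, card_compl, mul_assoc]

end Selection

theorem sum_nonempty_mul_pow_mul_one_sub_pow (ι : Type*) [Fintype ι] {p : ℝ} (hp : p ≠ 0)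
    (r : ℝ) :
    ∑ S : Finset ι with S.Nonempty, r * p ^ (#S - 1) * (1 - p) ^ (Fintype.card ι - #S)
      = (1 - (1 - p) ^ Fintype.card ι) * r / p := by
  classical
  have hterm : ∀ S : Finset ι, S.Nonempty →
      r * p ^ (#S - 1) * (1 - p) ^ (Fintype.card ι - #S) * p
        = r * (p ^ #S * (1 - p) ^ (Fintype.card ι - #S)) := by
    intro S hS
    rw [← Nat.sub_add_cancel hS.card_pos, pow_succ, Nat.add_sub_cancel]
    ring
  have hbinom := Fintype.sum_pow_mul_eq_add_pow ι p (1 - p)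
  rw [add_sub_cancel, one_pow, ← add_sum_erase _ _ (mem_univ ∅), card_empty, pow_zero, one_mul,
    Nat.sub_zero] at hbinom
  rw [eq_div_iff hp, sum_mul, sum_congr rfl fun S hS => hterm S (mem_filter.1 hS).2, ← mul_sum]
  simp only [nonempty_iff_ne_empty, filter_ne']
  linear_combination r * hbinom

section Probability

variable {Ω ι : Type*} [MeasurableSpace Ω] {μ : Measure Ω}

theorem measurableSet_isFirstIn (S : Finset ι) (i : ι) :
    MeasurableSet {t : ι → ℝ | IsFirstIn t S i} := by
  simp only [IsFirstIn, Set.ofPred_forall]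
  exact .biInter S.countable_toSet fun j _ => .iInter fun _ =>
    measurableSet_lt (measurable_pi_apply i) (measurable_pi_apply j)

theorem sum_measure_isFirstIn_eq_one [IsProbabilityMeasure μ] {T : ι → Ω → ℝ}
    (hT : ∀ i, Measurable (T i)) (hinj : ∀ᵐ ω ∂μ, Injective fun i => T i ω) {S : Finset ι}
    (hS : S.Nonempty) :
    ∑ i ∈ S, μ {ω | IsFirstIn (T · ω) S i} = 1 := by
  have hmeas : ∀ i ∈ S, MeasurableSet {ω | IsFirstIn (T · ω) S i} := fun i _ =>
    measurable_pi_lambda _ hT (measurableSet_isFirstIn S i)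
  have hdisj : (S : Set ι).PairwiseDisjoint fun i => {ω | IsFirstIn (T · ω) S i} :=
    fun i hi j hj hij => Set.disjoint_left.2 fun ω (hωi : IsFirstIn (T · ω) S i)
      (hωj : IsFirstIn (T · ω) S j) => hij (hωi.eq hωj hi hj)
  rw [← measure_biUnion_finset hdisj hmeas, ← measure_univ (μ := μ)]
  refine measure_congr (Filter.eventuallyEq_set.2 (hinj.mono fun ω hω => ?_))
  simpa using exists_isFirstIn hω hS

theorem measurableSet_exceedanceBox [DecidableEq ι] (α z : ℝ) (S : Finset ι) (i j : ι) :
    MeasurableSet (exceedanceBox α z S i j) := by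
  simp only [exceedanceBox, Finset.piecewise, update_apply]
  split_ifs
  exacts [measurableSet_Ioi, measurableSet_Ioi, measurableSet_Iic]

variable [Fintype ι]

theorem measurableSet_exceedances_eq_and_lt (α z : ℝ) (S : Finset ι) (i : ι) :
    MeasurableSet {x : ι → ℝ | exceedances α x = S ∧ z < x i} := by
  simp only [exceedances, Finset.ext_iff, mem_filter, mem_univ, true_and, Set.ofPred_and,
    Set.ofPred_forall]
  exact (MeasurableSet.iInter fun j => measurableSet_setOfPred.2
    ((measurableSet_lt measurable_const (measurable_pi_apply j)).mem.iff measurable_const)).inter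
    (measurableSet_lt measurable_const (measurable_pi_apply i))

theorem measure_lt_eq_sum_isFirstIn_inter_of_isSFProgress [Nonempty ι] {T Z : ι → Ω → ℝ}
    {Zstar : Ω → ℝ} {α z : ℝ} (hαz : α < z) (hT : ∀ i, Measurable (T i))
    (hZ : ∀ i, Measurable (Z i)) (hinj : ∀ᵐ ω ∂μ, Injective fun i => T i ω)
    (hSF : ∀ ω, IsSFProgress α (T · ω) (Z · ω) (Zstar ω)) :
    μ {ω | z < Zstar ω} = ∑ S, ∑ i ∈ S,
      μ ({ω | IsFirstIn (T · ω) S i} ∩ {ω | exceedances α (Z · ω) = S ∧ z < Z i ω}) := by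
  set P : Finset (Σ _ : Finset ι, ι) := univ.sigma fun S => S
  set A : (Σ _ : Finset ι, ι) → Set Ω := fun p =>
    {ω | IsFirstIn (T · ω) p.1 p.2} ∩ {ω | exceedances α (Z · ω) = p.1 ∧ z < Z p.2 ω}
  have hcover : {ω | z < Zstar ω} =ᵐ[μ] ⋃ p ∈ P, A p := by
    refine Filter.eventuallyEq_set.2 (hinj.mono fun ω hω => ?_)
    simp only [Set.mem_ofPred_eq, (hSF ω).lt_iff hω hαz, Set.mem_iUnion, mem_sigma, mem_univ,
      true_and, exists_prop, Sigma.exists, P, A, Set.mem_inter_iff]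
    constructor
    · rintro ⟨i, hi, hfirst, hz⟩
      exact ⟨_, i, hi, hfirst, rfl, hz⟩
    · rintro ⟨S, i, hi, hfirst, rfl, hz⟩
      exact ⟨i, hi, hfirst, hz⟩
  have hdisj : (P : Set (Σ _ : Finset ι, ι)).PairwiseDisjoint A := by
    rintro ⟨S, i⟩ hi ⟨S', i'⟩ hi' hne
    refine Set.disjoint_left.2 fun ω hω hω' => hne ?_
    simp only [P, A, mem_coe, mem_sigma, mem_univ, true_and, Set.mem_inter_iff,
      Set.mem_ofPred_eq] at hi hi' hω hω'
    obtain ⟨hfirst, rfl, -⟩ := hω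
    obtain ⟨hfirst', rfl, -⟩ := hω'
    rw [hfirst.eq hfirst' hi hi']
  have hmeas : ∀ p ∈ P, MeasurableSet (A p) := fun p _ =>
    (measurable_pi_lambda _ hT (measurableSet_isFirstIn _ _)).inter
      (measurable_pi_lambda _ hZ (measurableSet_exceedances_eq_and_lt _ _ _ _))
  rw [measure_congr hcover, measure_biUnion_finset hdisj hmeas, sum_sigma]

variable [DecidableEq ι]

theorem measure_exceedances_eq_and_lt {Z : ι → Ω → ℝ} {ν : Measure ℝ}
    (hZ : ∀ j, AEMeasurable (Z j) μ) (hind : iIndepFun Z μ) (hlaw : ∀ j, μ.map (Z j) = ν)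
    {α z : ℝ} (hαz : α ≤ z) {S : Finset ι} {i : ι} (hi : i ∈ S) :
    μ {ω | exceedances α (Z · ω) = S ∧ z < Z i ω}
      = ν (Set.Ioi z) * ν (Set.Ioi α) ^ (#S - 1) * ν (Set.Iic α) ^ (Fintype.card ι - #S) := by
  have := hind.isProbabilityMeasure
  have hset : {ω | exceedances α (Z · ω) = S ∧ z < Z i ω}
      = (fun ω j => Z j ω) ⁻¹' Set.univ.pi (exceedanceBox α z S i) :=
    Set.ext fun ω => exceedances_eq_and_lt_iff hαz hi
  rw [hset, ← Measure.map_apply_of_aemeasurable (aemeasurable_pi_lambda _ hZ)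
    (.univ_pi (measurableSet_exceedanceBox α z S i)), hind.map_fun_eq_pi_map hZ, Measure.pi_pi,
    ← prod_piecewise_update_const hi]
  simp only [hlaw, exceedanceBox, Finset.piecewise, update_apply, apply_ite]

theorem measure_lt_eq_sum_nonempty_of_isSFProgress [Nonempty ι] {T Z : ι → Ω → ℝ}
    {Zstar : Ω → ℝ} {ν : Measure ℝ} {α z : ℝ} (hαz : α < z) (hT : ∀ i, Measurable (T i))
    (hZ : ∀ i, Measurable (Z i)) (hinj : ∀ᵐ ω ∂μ, Injective fun i => T i ω)
    (hTZ : IndepFun (fun ω i => T i ω) (fun ω i => Z i ω) μ) (hZind : iIndepFun Z μ)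
    (hlaw : ∀ j, μ.map (Z j) = ν) (hSF : ∀ ω, IsSFProgress α (T · ω) (Z · ω) (Zstar ω)) :
    μ {ω | z < Zstar ω} = ∑ S : Finset ι with S.Nonempty,
      ν (Set.Ioi z) * ν (Set.Ioi α) ^ (#S - 1) * ν (Set.Iic α) ^ (Fintype.card ι - #S) := by
  have := hZind.isProbabilityMeasure
  rw [measure_lt_eq_sum_isFirstIn_inter_of_isSFProgress hαz hT hZ hinj hSF, sum_filter]
  refine sum_congr rfl fun S _ => ?_
  calc ∑ i ∈ S, μ ({ω | IsFirstIn (T · ω) S i} ∩ {ω | exceedances α (Z · ω) = S ∧ z < Z i ω})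
      = ∑ i ∈ S, μ {ω | IsFirstIn (T · ω) S i} *
          (ν (Set.Ioi z) * ν (Set.Ioi α) ^ (#S - 1) * ν (Set.Iic α) ^ (Fintype.card ι - #S)) :=
        sum_congr rfl fun i hi =>
          (hTZ.measure_inter_preimage_eq_mul _ _ (measurableSet_isFirstIn S i)
            (measurableSet_exceedances_eq_and_lt α z S i)).trans <| congrArg _ <|
            measure_exceedances_eq_and_lt (fun j => (hZ j).aemeasurable) hZind hlaw hαz.le hi
    _ = _ := by
        rw [← sum_mul]
        split_ifs with hS
        · rw [sum_measure_isFirstIn_eq_one hT hinj hS, one_mul]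
        · rw [not_nonempty_iff_eq_empty.1 hS, sum_empty, zero_mul]

end Probability

theorem sf_progress_tail_above_threshold_general
    {Ω : Type*} [MeasureSpace Ω] [IsProbabilityMeasure (ℙ : Measure Ω)]
    (K : ℕ) (hK : 1 ≤ K) (α : ℝ)
    (T Z : Fin K → Ω → ℝ)
    (hTmeas : ∀ i, Measurable (T i)) (hZmeas : ∀ i, Measurable (Z i))
    (hpairsIndep : iIndepFun (fun i ω => (T i ω, Z i ω)) ℙ)
    (hpairsIdent : ∀ i, Measure.map (fun ω => (T i ω, Z i ω)) ℙ
      = Measure.map (fun ω => (T ⟨0, hK⟩ ω, Z ⟨0, hK⟩ ω)) ℙ)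
    (hTunif : ∀ i, Measure.map (T i) ℙ = volume.restrict (Set.Icc (0 : ℝ) 1))
    (hTZindep : ∀ i, IndepFun (T i) (Z i) ℙ)
    (hpα : 0 < (ℙ {ω | α < Z ⟨0, hK⟩ ω}).toReal)
    (Zstar : Ω → ℝ)
    (hZstarNonempty : ∀ ω, ∀ h : (Finset.univ.filter fun i => α < Z i ω).Nonempty,
      ∃ i ∈ Finset.univ.filter fun i => α < Z i ω,
        (∀ j ∈ Finset.univ.filter fun i => α < Z i ω, T i ω ≤ T j ω) ∧
        Zstar ω = Z i ω)
    (hZstarEmpty : ∀ ω, ¬ (Finset.univ.filter fun i => α < Z i ω).Nonempty →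
      Zstar ω = ⨆ i, Z i ω) :
    ∀ z : ℝ, α < z → z ≤ 1 →
      (ℙ {ω | z < Zstar ω}).toReal
        = (1 - (1 - (ℙ {ω | α < Z ⟨0, hK⟩ ω}).toReal) ^ K)
          * (ℙ {ω | z < Z ⟨0, hK⟩ ω}).toReal
          / (ℙ {ω | α < Z ⟨0, hK⟩ ω}).toReal := by
  intro z hαz _
  have : Nonempty (Fin K) := ⟨⟨0, hK⟩⟩
  have hTind : iIndepFun T ℙ := hpairsIndep.comp (fun _ => Prod.fst) fun _ => measurable_fst
  have hZind : iIndepFun Z ℙ := hpairsIndep.comp (fun _ => Prod.snd) fun _ => measurable_snd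
  have hZlaw (j : Fin K) : Measure.map (Z j) ℙ = Measure.map (Z ⟨0, hK⟩) ℙ := by
    have hsnd (k : Fin K) : Measure.map (Z k) ℙ
        = (Measure.map (fun ω => (T k ω, Z k ω)) ℙ).map Prod.snd :=
      (Measure.map_map measurable_snd ((hTmeas k).prodMk (hZmeas k))).symm
    rw [hsnd, hsnd, hpairsIdent]
  have hinj : ∀ᵐ ω ∂ℙ, Injective fun i => T i ω :=
    ae_injective_of_iIndepFun (fun i => (hTmeas i).aemeasurable) hTind fun i => by
      rw [hTunif i]
      infer_instance
  have hTZ := indepFun_pi_of_iIndepFun_prodMk (fun i => (hTmeas i).aemeasurable)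
    (fun i => (hZmeas i).aemeasurable) hpairsIndep hTZindep
  have hcompl : (ℙ (Z ⟨0, hK⟩ ⁻¹' Set.Iic α)).toReal
      = 1 - (ℙ (Z ⟨0, hK⟩ ⁻¹' Set.Ioi α)).toReal := by
    rw [← Set.compl_Ioi, Set.preimage_compl]
    exact probReal_compl_eq_one_sub (hZmeas _ measurableSet_Ioi)
  rw [measure_lt_eq_sum_nonempty_of_isSFProgress hαz hTmeas hZmeas hinj hTZ hZind hZlaw
    (fun ω => ⟨hZstarNonempty ω, hZstarEmpty ω⟩), ENNReal.toReal_sum (by finiteness)]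
  simp only [ENNReal.toReal_mul, ENNReal.toReal_pow,
    Measure.map_apply (hZmeas _) measurableSet_Ioi, Measure.map_apply (hZmeas _) measurableSet_Iic,
    hcompl, Fintype.card_fin]
  have hsum := sum_nonempty_mul_pow_mul_one_sub_pow (Fin K) hpα.ne' (ℙ {ω | z < Z ⟨0, hK⟩ ω}).toReal
  rw [Fintype.card_fin] at hsum
  exact hsum

/-- Equation (27) of the paper: tail probability of the one-hop progress of the
SF policy above the threshold. The `K` pairs `(Tᵢ, Zᵢ)` are i.i.d., with `Tᵢ`
uniform on `[0,1]`, `Zᵢ ∈ [0,1]`, and `Tᵢ` independent of `Zᵢ`; assume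
`p_α = ℙ(Z₁ > α) > 0`. The progress `Z*` equals the progress of the
first-to-wake node whose progress exceeds the threshold `α`, if any, and the
maximal progress otherwise. Then for `z ∈ (α,1]`,
`ℙ(Z* > z) = (1 − (1 − p_α)^K) · p_z / p_α` where `p_z = ℙ(Z₁ > z)`. -/
theorem sf_progress_tail_above_threshold
    {Ω : Type*} [MeasureSpace Ω] [IsProbabilityMeasure (ℙ : Measure Ω)]
    (K : ℕ) (hK : 1 ≤ K) (α : ℝ) (hα : α ∈ Set.Icc (0 : ℝ) 1)
    (T Z : Fin K → Ω → ℝ)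
    (hTmeas : ∀ i, Measurable (T i)) (hZmeas : ∀ i, Measurable (Z i))
    (hpairsIndep : iIndepFun (fun i ω => (T i ω, Z i ω)) ℙ)
    (hpairsIdent : ∀ i, Measure.map (fun ω => (T i ω, Z i ω)) ℙ
      = Measure.map (fun ω => (T ⟨0, hK⟩ ω, Z ⟨0, hK⟩ ω)) ℙ)
    (hTunif : ∀ i, Measure.map (T i) ℙ = volume.restrict (Set.Icc (0 : ℝ) 1))
    (hZ01 : ∀ i, ∀ᵐ ω ∂ℙ, Z i ω ∈ Set.Icc (0 : ℝ) 1)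
    (hTZindep : ∀ i, IndepFun (T i) (Z i) ℙ)
    (hpα : 0 < (ℙ {ω | α < Z ⟨0, hK⟩ ω}).toReal)
    (Zstar : Ω → ℝ)
    (hZstarNonempty : ∀ ω, ∀ h : (Finset.univ.filter fun i => α < Z i ω).Nonempty,
      ∃ i ∈ Finset.univ.filter fun i => α < Z i ω,
        (∀ j ∈ Finset.univ.filter fun i => α < Z i ω, T i ω ≤ T j ω) ∧
        Zstar ω = Z i ω)
    (hZstarEmpty : ∀ ω, ¬ (Finset.univ.filter fun i => α < Z i ω).Nonempty →
      Zstar ω = ⨆ i, Z i ω) :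
    ∀ z : ℝ, α < z → z ≤ 1 →
      (ℙ {ω | z < Zstar ω}).toReal
        = (1 - (1 - (ℙ {ω | α < Z ⟨0, hK⟩ ω}).toReal) ^ K)
          * (ℙ {ω | z < Z ⟨0, hK⟩ ω}).toReal
          / (ℙ {ω | α < Z ⟨0, hK⟩ ω}).toReal :=
  sf_progress_tail_above_threshold_general K hK α T Z hTmeas hZmeas hpairsIndep hpairsIdent hTunif
    hTZindep hpα Zstar hZstarNonempty hZstarEmpty
end
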